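/- Let R → S be a faithfully flat homomorphism of Noetherian rings of prime characteristic p > 0 and I an ideal of R. Then I^F S ⊆ (IS)^F, and if (IS)^{F,[p^e]} = (IS)^{[p^e]} in S then (I^F)^{[p^e]} ⊆ I^{[p^e]} in R; in particular Fte(I) ≤ Fte(IS). -/

import Mathlib

/-!
Extension along `R → S` commutes with Frobenius powers, so it carries `I^F` into `(IS)^F` and
`(I^F)^{[q]}` into `((IS)^F)^{[q]}`. If the latter equals `(IS)^{[q]}`, then `(I^F)^{[q]} S` lies
in `I^{[q]} S`, and faithful flatness contracts this back to `(I^F)^{[q]} ⊆ I^{[q]}`.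
-/

open Ideal

/-- The `q`-th Frobenius power of an ideal: the ideal generated by `q`-th powers of its elements. -/
def frobPow {R : Type*} [CommRing R] (I : Ideal R) (q : ℕ) : Ideal R :=
  Ideal.span ((· ^ q) '' (I : Set R))

/-- The Frobenius closure of an ideal, as a set. -/
def frobClosure {R : Type*} [CommRing R] (I : Ideal R) (p : ℕ) : Set R :=
  {x | ∃ e : ℕ, x ^ p ^ e ∈ frobPow I (p ^ e)}

section FrobeniusPower

variable {R S : Type*} [CommRing R] [CommRing S]

lemma pow_mem_frobPow {I : Ideal R} {x : R} (hx : x ∈ I) (q : ℕ) : x ^ q ∈ frobPow I q :=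
  Ideal.subset_span ⟨x, hx, rfl⟩

lemma frobPow_mono {I J : Ideal R} (h : I ≤ J) (q : ℕ) : frobPow I q ≤ frobPow J q :=
  Ideal.span_mono (Set.image_mono h)

lemma frobPow_eq_map (p : ℕ) [ExpChar R p] (I : Ideal R) (e : ℕ) :
    frobPow I (p ^ e) = I.map (iterateFrobenius R p e) :=
  rfl

lemma map_frobPow (p : ℕ) [ExpChar S p] (φ : R →+* S) (I : Ideal R) (e : ℕ) :
    (frobPow I (p ^ e)).map φ = frobPow (I.map φ) (p ^ e) := by
  rw [frobPow_eq_map p (I.map φ), Ideal.map_map, frobPow, Ideal.map_span, Ideal.map,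
    Set.image_image]
  simp_rw [map_pow]
  rfl

lemma map_mem_frobClosure (p : ℕ) [ExpChar S p] (φ : R →+* S) {I : Ideal R} {a : R}
    (ha : a ∈ frobClosure I p) : φ a ∈ frobClosure (I.map φ) p := by
  obtain ⟨e, he⟩ := ha
  exact ⟨e, map_pow φ a _ ▸ map_frobPow p φ I e ▸ Ideal.mem_map_of_mem φ he⟩

lemma map_span_frobClosure_le (p : ℕ) [ExpChar S p] (φ : R →+* S) (I : Ideal R) :
    (Ideal.span (frobClosure I p)).map φ ≤ Ideal.span (frobClosure (I.map φ) p) := by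
  rw [Ideal.map_span]
  exact Ideal.span_mono (Set.image_subset_iff.mpr fun _ ↦ map_mem_frobClosure p φ)

end FrobeniusPower

lemma Ideal.le_of_map_le_map_of_faithfullyFlat {R S : Type*} [CommRing R] [CommRing S]
    [Algebra R S] [Module.FaithfullyFlat R S] {J K : Ideal R}
    (h : J.map (algebraMap R S) ≤ K.map (algebraMap R S)) : J ≤ K :=
  K.comap_map_eq_self_of_faithfullyFlat (B := S) ▸ Ideal.map_le_iff_le_comap.mp h

theorem fte_descends_faithfully_flat_general {R S : Type*} [CommRing R] [CommRing S]
    [Algebra R S] [Module.FaithfullyFlat R S]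
    (p : ℕ) [Fact p.Prime] [CharP S p] (I : Ideal R) :
    (∀ a ∈ frobClosure I p,
        algebraMap R S a ∈ frobClosure (I.map (algebraMap R S)) p) ∧
      ∀ e : ℕ,
        frobPow (Ideal.span (frobClosure (I.map (algebraMap R S)) p)) (p ^ e) =
            frobPow (I.map (algebraMap R S)) (p ^ e) →
          frobPow (Ideal.span (frobClosure I p)) (p ^ e) ≤ frobPow I (p ^ e) := by
  refine ⟨fun a ↦ map_mem_frobClosure p _, fun e hS ↦ ?_⟩
  apply Ideal.le_of_map_le_map_of_faithfullyFlat (S := S)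
  calc (frobPow (Ideal.span (frobClosure I p)) (p ^ e)).map (algebraMap R S)
      = frobPow ((Ideal.span (frobClosure I p)).map (algebraMap R S)) (p ^ e) :=
        map_frobPow p _ _ e
    _ ≤ frobPow (Ideal.span (frobClosure (I.map (algebraMap R S)) p)) (p ^ e) :=
        frobPow_mono (map_span_frobClosure_le p _ I) _
    _ = (frobPow I (p ^ e)).map (algebraMap R S) := by rw [hS, map_frobPow]

theorem fte_descends_faithfully_flat {R S : Type*} [CommRing R] [CommRing S]
    [IsNoetherianRing R] [IsNoetherianRing S] [Algebra R S] [Module.FaithfullyFlat R S]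
    (p : ℕ) [Fact p.Prime] [CharP R p] [CharP S p] (I : Ideal R) :
    (∀ a ∈ frobClosure I p,
        algebraMap R S a ∈ frobClosure (I.map (algebraMap R S)) p) ∧
      ∀ e : ℕ,
        frobPow (Ideal.span (frobClosure (I.map (algebraMap R S)) p)) (p ^ e) =
            frobPow (I.map (algebraMap R S)) (p ^ e) →
          frobPow (Ideal.span (frobClosure I p)) (p ^ e) ≤ frobPow I (p ^ e) :=
  fte_descends_faithfully_flat_general p I
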